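/- Let G be a finite simple graph without isolated vertices and assume that, for some integer k ≥ 2, the ideal J(G)^{(k)} is generated in a single degree. Then G is a very well-covered graph. -/

import Mathlib

open MvPolynomial

/-- `C` is a vertex cover of `G`: every edge is incident to a vertex of `C`. -/
def IsVertexCover {V : Type*} (G : SimpleGraph V) (C : Set V) : Prop :=
  ∀ ⦃a b : V⦄, G.Adj a b → a ∈ C ∨ b ∈ C

/-- `C` is a minimal vertex cover of `G`. -/
def IsMinVertexCover {V : Type*} (G : SimpleGraph V) (C : Set V) : Prop :=
  IsVertexCover G C ∧ ∀ D : Set V, D ⊂ C → ¬ IsVertexCover G D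

/-- `A` is an independent set of `G`. -/
def IsIndepSet {V : Type*} (G : SimpleGraph V) (A : Set V) : Prop :=
  ∀ ⦃a⦄, a ∈ A → ∀ ⦃b⦄, b ∈ A → ¬ G.Adj a b

/-- `A` is a maximal independent set of `G`. -/
def IsMaxIndepSet {V : Type*} (G : SimpleGraph V) (A : Set V) : Prop :=
  IsIndepSet G A ∧ ∀ B : Set V, IsIndepSet G B → A ⊆ B → A = B

/-- A graph is unmixed if all maximal independent sets have the same cardinality. -/
def Unmixed {V : Type*} (G : SimpleGraph V) : Prop :=
  ∀ A B : Set V, IsMaxIndepSet G A → IsMaxIndepSet G B → A.ncard = B.ncard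

/-- `G` has no isolated vertices. -/
def HasNoIsolatedVertex {V : Type*} (G : SimpleGraph V) : Prop :=
  ∀ v : V, ∃ w : V, G.Adj v w

/-- `G` is very well-covered: no isolated vertices, an even number of vertices, and every
maximal independent set has cardinality half the number of vertices. -/
def VeryWellCovered {V : Type*} [Fintype V] (G : SimpleGraph V) : Prop :=
  HasNoIsolatedVertex G ∧ Even (Fintype.card V) ∧
    ∀ A : Set V, IsMaxIndepSet G A → 2 * A.ncard = Fintype.card V

/-- `G` is claw-free: it has no induced subgraph isomorphic to `K_{1,3}`. -/
def ClawFree {V : Type*} (G : SimpleGraph V) : Prop :=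
  ¬ ∃ a b c d : V, G.Adj a b ∧ G.Adj a c ∧ G.Adj a d ∧
      ¬ G.Adj b c ∧ ¬ G.Adj b d ∧ ¬ G.Adj c d ∧ b ≠ c ∧ b ≠ d ∧ c ≠ d

/-- The graph obtained from `G` by deleting the vertices in `A`: it has the same vertex set,
and its edges are the edges of `G` avoiding `A` (so the vertices of `A` become isolated). -/
def deleteVerts {V : Type*} (G : SimpleGraph V) (A : Set V) : SimpleGraph V where
  Adj a b := G.Adj a b ∧ a ∉ A ∧ b ∉ A
  symm := ⟨fun a b ⟨h1, h2, h3⟩ => ⟨h1.symm, h3, h2⟩⟩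
  loopless := ⟨fun a h => G.loopless.irrefl a h.1⟩

/-- The closed neighborhood `N_G[F]` of a set of vertices `F`. -/
def closedNbhdSet {V : Type*} (G : SimpleGraph V) (F : Set V) : Set V :=
  ⋃ a ∈ F, insert a (G.neighborSet a)

/-- The cover ideal `J(G)` of the graph `G`:
the intersection of the ideals `(x_i, x_j)` over the edges `{x_i, x_j}` of `G`. -/
noncomputable def coverIdeal (K : Type*) [Field K] {V : Type*} (G : SimpleGraph V) :
    Ideal (MvPolynomial V K) :=
  ⨅ (p : V × V) (_ : G.Adj p.1 p.2), Ideal.span {X p.1, X p.2}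

/-- The `k`-th symbolic power `J(G)^{(k)}` of the cover ideal of `G`:
the intersection of the ideals `(x_i, x_j)^k` over the edges `{x_i, x_j}` of `G`
(the empty intersection being the unit ideal). -/
noncomputable def symbPow (K : Type*) [Field K] {V : Type*} (G : SimpleGraph V) (k : ℕ) :
    Ideal (MvPolynomial V K) :=
  ⨅ (p : V × V) (_ : G.Adj p.1 p.2), Ideal.span {X p.1, X p.2} ^ k

/-- The degree of a monomial with exponent vector `m`. -/
def mdeg {V : Type*} (m : V →₀ ℕ) : ℕ := m.sum fun _ e => e

/-- The monomial with exponent vector `m` is a minimal monomial generator of `I`. -/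
def IsMinGen {K : Type*} [Field K] {V : Type*} (I : Ideal (MvPolynomial V K)) (m : V →₀ ℕ) :
    Prop :=
  (monomial m (1 : K)) ∈ I ∧
    ∀ i : V, m i ≠ 0 → (monomial (m - Finsupp.single i 1) (1 : K)) ∉ I

/-- `deg I`: the maximum degree of a minimal monomial generator of `I`. -/
noncomputable def genDeg {K : Type*} [Field K] {V : Type*} (I : Ideal (MvPolynomial V K)) : ℕ :=
  sSup {d : ℕ | ∃ m : V →₀ ℕ, IsMinGen I m ∧ mdeg m = d}


/-!
A monomial `x^m` lies in `(x_a, x_b)^k` exactly when `m a + m b ≥ k`, so the monomials of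
`J(G)^{(k)}` are the exponent vectors putting weight at least `k` on every edge. For a maximal
independent set `A` with complement `C`, both `x_C^k` and `x_A x_C^{k-1}` are minimal generators
(using `k ≥ 2`, maximality of `A` and the absence of isolated vertices). Equating their degrees
gives `k |C| = |A| + (k - 1) |C|`, i.e. `|A| = |C|`.
-/

namespace MvPolynomial

variable {σ R : Type*} [CommSemiring R]

theorem le_add_of_mem_span_X_pair_pow {a b : σ} {k : ℕ} {f : MvPolynomial σ R}
    (hf : f ∈ Ideal.span {X a, X b} ^ k) : ∀ e ∈ f.support, k ≤ e a + e b := by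
  classical
  induction k generalizing f with
  | zero => exact fun _ _ => Nat.zero_le _
  | succ k ih =>
    rw [pow_succ] at hf
    refine Submodule.mul_induction_on hf (fun g hg h hh e he => ?_) (fun g h hg hh e he => ?_)
    · obtain ⟨e₁, he₁, e₂, he₂, rfl⟩ := Finset.mem_add.mp (support_mul g h he)
      rw [← Set.image_pair] at hh
      obtain ⟨i, hi, hi₂⟩ := mem_ideal_span_X_image.mp hh e₂ he₂
      have := ih hg e₁ he₁
      simp only [Finsupp.add_apply]
      rcases hi with rfl | rfl <;> omega
    · rcases Finset.mem_union.mp (support_add he) with he | he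
      exacts [hg e he, hh e he]

theorem monomial_mem_span_X_pair_pow {a b : σ} (hab : a ≠ b) {k : ℕ} {m : σ →₀ ℕ}
    (h : k ≤ m a + m b) (r : R) : monomial m r ∈ Ideal.span {X a, X b} ^ k := by
  classical
  obtain ⟨i, j, hi, hj, rfl⟩ : ∃ i j, i ≤ m a ∧ j ≤ m b ∧ i + j = k :=
    ⟨min (m a) k, k - min (m a) k, min_le_left _ _, by omega, by omega⟩
  set I : Ideal (MvPolynomial σ R) := Ideal.span {X a, X b}
  have hXab : X a ^ i * X b ^ j ∈ I ^ (i + j) := pow_add I i j ▸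
    Ideal.mul_mem_mul (Ideal.pow_mem_pow (Ideal.subset_span (by simp)) i)
      (Ideal.pow_mem_pow (Ideal.subset_span (by simp)) j)
  refine Ideal.mem_of_dvd _ ?_ hXab
  rw [X_pow_eq_monomial, X_pow_eq_monomial, monomial_mul, one_mul, monomial_dvd_monomial]
  refine ⟨Or.inr fun v => ?_, one_dvd r⟩
  simp only [Finsupp.add_apply, Finsupp.single_apply]
  split_ifs <;> subst_vars <;> first | omega | exact absurd rfl hab

theorem monomial_one_mem_span_X_pair_pow_iff [Nontrivial R] {a b : σ} (hab : a ≠ b) {k : ℕ}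
    {m : σ →₀ ℕ} : monomial m (1 : R) ∈ Ideal.span {X a, X b} ^ k ↔ k ≤ m a + m b :=
  ⟨fun h => le_add_of_mem_span_X_pair_pow h m (by classical simp [coeff_monomial]),
    fun h => monomial_mem_span_X_pair_pow hab h 1⟩

end MvPolynomial

section CoverIdeal

variable {V K : Type*} [Field K] {G : SimpleGraph V}

theorem monomial_mem_symbPow_iff {k : ℕ} {m : V →₀ ℕ} :
    monomial m (1 : K) ∈ symbPow K G k ↔ ∀ ⦃a b : V⦄, G.Adj a b → k ≤ m a + m b := by
  simp only [symbPow, Submodule.mem_iInf]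
  exact ⟨fun h a b hab => (monomial_one_mem_span_X_pair_pow_iff hab.ne).mp (h (a, b) hab),
    fun h p hp => (monomial_one_mem_span_X_pair_pow_iff hp.ne).mpr (h hp)⟩

theorem IsMaxIndepSet.exists_adj_of_notMem {A : Set V} (hA : IsMaxIndepSet G A) {i : V}
    (hi : i ∉ A) : ∃ j ∈ A, G.Adj i j := by
  by_contra! h
  have hind : IsIndepSet G (insert i A) := by
    rintro a (rfl | ha) b (rfl | hb)
    exacts [G.loopless.irrefl _, h _ hb, fun hab => h _ ha hab.symm, hA.1 ha hb]
  exact hi (hA.2 _ hind (Set.subset_insert i A) ▸ Set.mem_insert i A)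

theorem exists_isMaxIndepSet [Finite V] (G : SimpleGraph V) : ∃ A, IsMaxIndepSet G A := by
  obtain ⟨A, -, hA⟩ :=
    Finite.exists_le_maximal (p := IsIndepSet G) (a := ∅) (by simp [IsIndepSet])
  exact ⟨A, hA.prop, fun B hB hAB => hA.eq_of_subset hB hAB⟩

open Classical in
noncomputable def piecewiseExp [Finite V] (A : Set V) (x y : ℕ) : V →₀ ℕ :=
  Finsupp.equivFunOnFinite.symm (A.piecewise (fun _ => x) fun _ => y)

theorem piecewiseExp_apply [Finite V] (A : Set V) (x y : ℕ) (v : V) [Decidable (v ∈ A)] :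
    piecewiseExp A x y v = if v ∈ A then x else y := by
  simp [piecewiseExp, Set.piecewise]

theorem mdeg_piecewiseExp [Fintype V] (A : Set V) (x y : ℕ) :
    mdeg (piecewiseExp A x y) = A.ncard * x + Aᶜ.ncard * y := by
  classical
  rw [mdeg, Finsupp.sum_fintype _ _ fun _ => rfl]
  simp only [piecewiseExp_apply, Finset.sum_ite, Finset.sum_const, smul_eq_mul,
    ← Set.ncard_coe_finset, Finset.coe_filter, Finset.mem_univ, true_and, Set.ofPred_mem_eq]
  rfl

theorem isMinGen_piecewiseExp [Finite V] (hiso : HasNoIsolatedVertex G) {A : Set V}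
    (hA : IsMaxIndepSet G A) {k x y : ℕ} (hxy : x + y = k) (hy : k ≤ 2 * y) :
    IsMinGen (symbPow K G k) (piecewiseExp A x y) := by
  classical
  refine ⟨monomial_mem_symbPow_iff.mpr fun a b hab => ?_, fun i hi₀ => ?_⟩
  · have : a ∈ A → b ∉ A := fun ha hb => hA.1 ha hb hab
    simp only [piecewiseExp_apply]
    split_ifs <;> simp_all <;> omega
  · obtain ⟨j, hiff, hij⟩ : ∃ j, (i ∈ A ↔ j ∉ A) ∧ G.Adj i j := by
      by_cases hi : i ∈ A
      · obtain ⟨j, hij⟩ := hiso i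
        exact ⟨j, iff_of_true hi fun hj => hA.1 hi hj hij, hij⟩
      · obtain ⟨j, hj, hij⟩ := hA.exists_adj_of_notMem hi
        exact ⟨j, iff_of_false hi (not_not.mpr hj), hij⟩
    rw [monomial_mem_symbPow_iff]
    push Not
    refine ⟨i, j, hij, ?_⟩
    rw [piecewiseExp_apply] at hi₀
    simp only [Finsupp.tsub_apply, Finsupp.single_eq_same, Finsupp.single_eq_of_ne' hij.ne,
      piecewiseExp_apply]
    split_ifs <;> simp_all <;> omega

end CoverIdeal

/-- Lemma `singdeg`: if `G` is a finite simple graph without isolated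
vertices and `J(G)^{(k)}` is generated in a single degree for some `k ≥ 2`, then `G` is a
very well-covered graph. -/
theorem statement3 {V : Type*} [Fintype V] (K : Type*) [Field K] (G : SimpleGraph V)
    (hiso : HasNoIsolatedVertex G) (k : ℕ) (hk : 2 ≤ k)
    (hsingle : ∀ m m' : V →₀ ℕ, IsMinGen (symbPow K G k) m → IsMinGen (symbPow K G k) m' →
      mdeg m = mdeg m') :
    VeryWellCovered G := by
  have hhalf : ∀ A : Set V, IsMaxIndepSet G A → 2 * A.ncard = Fintype.card V := by
    intro A hA
    have hdeg := hsingle _ _ (isMinGen_piecewiseExp (K := K) hiso hA (zero_add k) (by omega))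
      (isMinGen_piecewiseExp (K := K) hiso hA (x := 1) (y := k - 1) (by omega) (by omega))
    rw [mdeg_piecewiseExp, mdeg_piecewiseExp] at hdeg
    have hcard := Set.ncard_add_ncard_compl A
    rw [Nat.card_eq_fintype_card] at hcard
    obtain ⟨k, rfl⟩ := Nat.exists_eq_add_of_le' (by omega : 1 ≤ k)
    simp only [Nat.add_sub_cancel, mul_zero, mul_one, mul_add] at hdeg
    omega
  obtain ⟨A, hA⟩ := exists_isMaxIndepSet G
  exact ⟨hiso, ⟨A.ncard, by rw [← hhalf A hA, two_mul]⟩, hhalf⟩
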